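/- arXiv:1506.06480 — 2 statements merged into one kernel-verified Lean document; each statement's English description precedes it below -/
import Mathlib

section
/- Let (R, m) be a two-dimensional regular local ring with m = (x, y). Suppose a = f_{11} x + f_{12} y and b = f_{21} x + f_{22} y with all f_{ij} ∈ m^2, and let c = f_{11} f_{22} - f_{12} f_{21}. Set Q = (a, b). Then Q : c = m. -/
/-!
Cramer's rule gives `x c, y c ∈ Q`, so `m ⊆ Q : c`, and it remains to see `c ∉ Q`. If
`c = r a + s b`, then `(f₁₂ + s x) b` and `(f₁₁ - s y) b` lie in `(a)`. As `b` is a nonzerodivisor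
modulo `a`, this makes `f₁₂ + s x = t a` and `f₁₁ - s y = u a`, and then
`a = f₁₁ x + f₁₂ y = a (u x + t y)` forces `1 = u x + t y ∈ m`.

That `b` is regular modulo `a` is a depth statement. First, `y` is regular modulo `x`: the colon
ideals `(x) : yⁿ` stabilise, and as `yⁿ ∉ (x)` (Krull's principal ideal theorem, `dim R = 2`)
Nakayama shows the stable one is `(x)`. Hence `m w ⊆ (a)` forces `w ∈ (a)`, so nothing nonzero in
`R/(a)` is killed by a power of `m`; but `mᵏ ⊆ (a, b)`, so any `z` with `z b ∈ (a)` is.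
-/

open IsLocalRing Ideal

section CramerRule

variable {R : Type*} [CommRing R] {x y f₁₁ f₁₂ f₂₁ f₂₂ a b c : R}

theorem span_pair_le_colon_span_det (ha : a = f₁₁ * x + f₁₂ * y) (hb : b = f₂₁ * x + f₂₂ * y)
    (hc : c = f₁₁ * f₂₂ - f₁₂ * f₂₁) :
    span {x, y} ≤ (span {a, b}).colon (span {c} : Set R) := by
  rw [span_le, Ideal.colon_span]
  rintro _ (rfl | rfl) <;> rw [SetLike.mem_coe, Submodule.mem_colon_singleton, mem_span_pair]
  · exact ⟨f₂₂, -f₁₂, by rw [smul_eq_mul, ha, hb, hc]; ring⟩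
  · exact ⟨-f₂₁, f₁₁, by rw [smul_eq_mul, ha, hb, hc]; ring⟩

theorem one_mem_span_pair_of_det_mem (ha : a = f₁₁ * x + f₁₂ * y) (hb : b = f₂₁ * x + f₂₂ * y)
    (hc : c = f₁₁ * f₂₂ - f₁₂ * f₂₁) (ha₀ : a ∈ nonZeroDivisors R)
    (hreg : ∀ z, z * b ∈ span {a} → z ∈ span {a}) (hcQ : c ∈ span {a, b}) :
    (1 : R) ∈ span {x, y} := by
  obtain ⟨r, s, hrs⟩ := mem_span_pair.mp hcQ
  obtain ⟨t, ht⟩ := mem_span_singleton'.mp <| hreg (f₁₂ + s * x) <| mem_span_singleton'.mpr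
    ⟨f₂₂ - r * x, by linear_combination f₂₂ * ha - f₁₂ * hb - x * hc - x * hrs⟩
  obtain ⟨u, hu⟩ := mem_span_singleton'.mp <| hreg (f₁₁ - s * y) <| mem_span_singleton'.mpr
    ⟨f₂₁ + r * y, by linear_combination f₂₁ * ha - f₁₁ * hb + y * hc + y * hrs⟩
  have h : (1 - (u * x + t * y)) * a = 0 := by linear_combination ha - x * hu - y * ht
  rw [sub_eq_zero.mp ((mul_right_mem_nonZeroDivisors_eq_zero_iff ha₀).mp h)]
  exact mem_span_pair.mpr ⟨u, t, rfl⟩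

end CramerRule

section TwoGeneratedMaximalIdeal

variable {R : Type*} [CommRing R] [IsNoetherianRing R] [IsLocalRing R]

theorem radical_span_singleton_ne_maximalIdeal (hdim : 1 < ringKrullDim R) (t : R) :
    (span {t}).radical ≠ maximalIdeal R := by
  intro h
  have hmin : maximalIdeal R ∈ (span {t}).minimalPrimes := by
    rw [← radical_minimalPrimes, h, minimalPrimes_eq_subsingleton_self]
    rfl
  have := WithBot.coe_le_coe.mpr (height_le_one_of_isPrincipal_of_mem_minimalPrimes _ _ hmin)
  rw [maximalIdeal_height_eq_ringKrullDim] at this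
  exact absurd hdim (not_lt.mpr this)

theorem pow_notMem_span_singleton {x y : R} (hm : maximalIdeal R = span {x, y})
    (hdim : 1 < ringKrullDim R) (k : ℕ) : y ^ k ∉ span {x} := by
  intro hk
  refine radical_span_singleton_ne_maximalIdeal hdim x (le_antisymm ?_ ?_)
  · exact (IsMaximal.isPrime inferInstance).radical_le_iff.mpr
      (hm ▸ span_mono (by simp))
  · rw [hm, span_le]
    rintro _ (rfl | rfl)
    exacts [le_radical (mem_span_singleton_self _), ⟨k, hk⟩]

theorem mem_span_singleton_of_mul_mem {x y : R} (hm : maximalIdeal R = span {x, y})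
    (hdim : 1 < ringKrullDim R) {α : R} (hα : α * y ∈ span {x}) : α ∈ span {x} := by
  let L : ℕ →o Ideal R :=
    ⟨fun n ↦ (span {x}).colon {y ^ n}, fun i j hij r hr ↦ by
      rw [Submodule.mem_colon_singleton, smul_eq_mul] at hr ⊢
      rw [← Nat.add_sub_cancel' hij, pow_add, ← mul_assoc]
      exact mul_mem_right _ _ hr⟩
  obtain ⟨n, hn⟩ := monotone_stabilizes_iff_noetherian.mpr inferInstance L
  have hmem : ∀ {k β}, β ∈ L k ↔ β * y ^ k ∈ span {x} := fun {_ _} ↦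
    Submodule.mem_colon_singleton
  have hle : L n ≤ span {x} ⊔ maximalIdeal R • L n := by
    intro β hβ
    have hβm : β ∈ maximalIdeal R := by
      refine (mem_maximalIdeal _).mpr fun hu ↦ pow_notMem_span_singleton hm hdim n ?_
      exact (unit_mul_mem_iff_mem _ hu).mp (mul_comm β _ ▸ hmem.mp hβ)
    obtain ⟨γ, δ, rfl⟩ := mem_span_pair.mp (hm ▸ hβm)
    have hδ : δ ∈ L n := by
      rw [hn (n + 1) n.le_succ, hmem, pow_succ]
      convert sub_mem (hmem.mp hβ) (mul_mem_left _ (γ * y ^ n) (mem_span_singleton_self x))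
        using 1
      ring
    exact Submodule.add_mem_sup (mem_span_singleton'.mpr ⟨γ, rfl⟩)
      (mul_comm y δ ▸ Submodule.smul_mem_smul (hm ▸ subset_span (by simp)) hδ)
  have hLx := Submodule.le_of_le_smul_of_le_jacobson_bot (IsNoetherian.noetherian _)
    (maximalIdeal_le_jacobson _) hle
  refine hLx (hn (n + 1) n.le_succ ▸ hmem.mpr ?_)
  rw [pow_succ', ← mul_assoc]
  exact mul_mem_right _ _ hα

theorem mem_span_singleton_of_forall_mul_mem [IsDomain R] {x y : R}
    (hm : maximalIdeal R = span {x, y}) (hdim : 1 < ringKrullDim R) {a w : R} (ha : a ≠ 0)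
    (hw : ∀ t ∈ maximalIdeal R, t * w ∈ span {a}) : w ∈ span {a} := by
  obtain ⟨α, hα⟩ := mem_span_singleton'.mp (hw x (hm ▸ subset_span (by simp)))
  obtain ⟨β, hβ⟩ := mem_span_singleton'.mp (hw y (hm ▸ subset_span (by simp)))
  have hαβ : α * y = β * x := mul_right_cancel₀ ha (by linear_combination y * hα - x * hβ)
  obtain ⟨γ, hγ⟩ := mem_span_singleton'.mp <| mem_span_singleton_of_mul_mem hm hdim <|
    hαβ ▸ mul_mem_left _ β (mem_span_singleton_self x)
  have hx : x ≠ 0 := by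
    rintro rfl
    exact pow_notMem_span_singleton (y := 0) (hm.trans (by rw [Set.pair_comm])) hdim 1 (by simp)
  exact mem_span_singleton'.mpr
    ⟨γ, mul_left_cancel₀ hx (by linear_combination a * hγ + hα)⟩

theorem mem_span_singleton_of_forall_pow_mul_mem [IsDomain R] {x y : R}
    (hm : maximalIdeal R = span {x, y}) (hdim : 1 < ringKrullDim R) {a : R} (ha : a ≠ 0)
    (k : ℕ) {w : R} (hw : ∀ t ∈ maximalIdeal R ^ k, t * w ∈ span {a}) : w ∈ span {a} := by
  induction k generalizing w with
  | zero => simpa using hw 1 (by simp)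
  | succ k ih =>
    refine mem_span_singleton_of_forall_mul_mem hm hdim ha fun s hs ↦ ih fun t ht ↦ ?_
    rw [← mul_assoc]
    exact hw _ (pow_succ (maximalIdeal R) k ▸ mul_mem_mul ht hs)

theorem mem_span_singleton_of_mul_mem_of_radical_eq [IsDomain R] {x y : R}
    (hm : maximalIdeal R = span {x, y}) (hdim : 1 < ringKrullDim R) {a b : R} (ha : a ≠ 0)
    (hrad : (span {a, b}).radical = maximalIdeal R) {z : R} (hz : z * b ∈ span {a}) :
    z ∈ span {a} := by
  obtain ⟨k, hk⟩ := exists_pow_le_of_le_radical_of_fg hrad.ge (IsNoetherian.noetherian _)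
  refine mem_span_singleton_of_forall_pow_mul_mem hm hdim ha k fun t ht ↦ ?_
  obtain ⟨r, s, rfl⟩ := mem_span_pair.mp (hk ht)
  convert add_mem (mul_mem_left _ (r * z) (mem_span_singleton_self a)) (mul_mem_left _ s hz)
    using 1
  ring

end TwoGeneratedMaximalIdeal

theorem stmt_3_general (R : Type*) [CommRing R] [IsDomain R] [IsNoetherianRing R] [IsLocalRing R]
    (hdim : ringKrullDim R = 2) (x y : R)
    (hm : maximalIdeal R = Ideal.span {x, y})
    (f₁₁ f₁₂ f₂₁ f₂₂ : R)
    (a b c : R) (ha : a = f₁₁ * x + f₁₂ * y) (hb : b = f₂₁ * x + f₂₂ * y)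
    (hc : c = f₁₁ * f₂₂ - f₁₂ * f₂₁)
    (hQ : (Ideal.span {a, b} : Ideal R).radical = maximalIdeal R) :
    Submodule.colon (Ideal.span {a, b} : Ideal R) (Ideal.span {c}) = maximalIdeal R := by
  have hdim' : 1 < ringKrullDim R := by rw [hdim]; exact WithBot.coe_lt_coe.mpr (by norm_num)
  have ha₀ : a ≠ 0 := by
    rintro rfl
    exact radical_span_singleton_ne_maximalIdeal hdim' b (by simpa using hQ)
  have hcQ : c ∉ span {a, b} := fun hcQ ↦ (maximalIdeal.isMaximal R).ne_top <|
    (eq_top_iff_one _).mpr <| hm ▸ one_mem_span_pair_of_det_mem ha hb hc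
      (mem_nonZeroDivisors_of_ne_zero ha₀)
      (fun _ ↦ mem_span_singleton_of_mul_mem_of_radical_eq hm hdim' ha₀ hQ) hcQ
  refine ((maximalIdeal.isMaximal R).eq_of_le ?_ (hm ▸ span_pair_le_colon_span_det ha hb hc)).symm
  rwa [Ne, Submodule.colon_eq_top_iff_subset, SetLike.coe_subset_coe, span_singleton_le_iff_mem]

theorem stmt_3 (R : Type*) [CommRing R] [IsDomain R] [IsNoetherianRing R] [IsLocalRing R]
    (hdim : ringKrullDim R = 2) (x y : R)
    (hm : maximalIdeal R = Ideal.span {x, y})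
    (f₁₁ f₁₂ f₂₁ f₂₂ : R)
    (h11 : f₁₁ ∈ maximalIdeal R ^ 2) (h12 : f₁₂ ∈ maximalIdeal R ^ 2)
    (h21 : f₂₁ ∈ maximalIdeal R ^ 2) (h22 : f₂₂ ∈ maximalIdeal R ^ 2)
    (a b c : R) (ha : a = f₁₁ * x + f₁₂ * y) (hb : b = f₂₁ * x + f₂₂ * y)
    (hc : c = f₁₁ * f₂₂ - f₁₂ * f₂₁)
    (hQ : (Ideal.span {a, b} : Ideal R).radical = maximalIdeal R) :
    Submodule.colon (Ideal.span {a, b} : Ideal R) (Ideal.span {c}) = maximalIdeal R :=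
  stmt_3_general R hdim x y hm f₁₁ f₁₂ f₂₁ f₂₂ a b c ha hb hc hQ
end

section
/- Let (R, m) be a two-dimensional regular local ring with m = (x, y). Suppose a = f_{11} x + f_{12} y and b = f_{21} x + f_{22} y with all f_{ij} ∈ m^2 and Q = (a, b) a parameter ideal. Let c = f_{11} f_{22} - f_{12} f_{21}. Then Q : m = Q + (c). -/
/-!
By Krull's principal ideal theorem `m` is not minimal over `(x)`, so `R ⧸ (x)` is a
one-dimensional local ring with principal maximal ideal, hence a domain. Thus `x, y` is a regular
sequence: every relation `α x = β y` is a multiple of the Koszul relation. As `(a, b)` contains a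
power of `m` and `(g) : m = (g)` for every `g`, the pair `a, b` has the same property.

If `r x = u a + v b` and `r y = s a + t b`, the Koszul relation of `a, b` applied to
`y (u a + v b) = x (s a + t b)` produces `w` such that `r - w c` has coefficients which are Koszul
relations of `x, y`; this forces `r - w c ∈ (a, b)`. Conversely `c x = f₂₂ a - f₁₂ b` and
`c y = f₁₁ b - f₂₁ a`.
-/

open IsLocalRing Ideal

def HasOnlyKoszulSyzygies {R : Type*} [CommRing R] (x y : R) : Prop :=
  ∀ α β : R, α * x = β * y → ∃ δ, α = δ * y ∧ β = δ * x

theorem Ideal.colon_pow_eq_self {R : Type*} [CommRing R] {I J : Ideal R}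
    (h : I.colon (J : Set R) = I) (n : ℕ) : I.colon ((J ^ n : Ideal R) : Set R) = I := by
  induction n with
  | zero => simp [Submodule.colon_univ]
  | succ n ih =>
    refine le_antisymm (fun r hr => ?_) Ideal.le_colon
    rw [← ih, Submodule.mem_colon]
    intro s hs
    rw [← h, Submodule.mem_colon]
    intro j hj
    simpa [mul_assoc] using Submodule.mem_colon.mp hr _ (pow_succ J n ▸ mul_mem_mul hs hj)

namespace HasOnlyKoszulSyzygies

variable {R : Type*} [CommRing R] {x y : R}

theorem ne_zero_or_ne_zero [Nontrivial R] (h : HasOnlyKoszulSyzygies x y) : x ≠ 0 ∨ y ≠ 0 := by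
  by_contra! hxy
  obtain ⟨δ, h1, -⟩ := h 1 0 (by simp [hxy])
  simp [hxy] at h1

theorem eq_of_mul_eq_mul [IsDomain R] (h : HasOnlyKoszulSyzygies x y) {r r' : R}
    (hx : r * x = r' * x) (hy : r * y = r' * y) : r = r' := by
  rcases h.ne_zero_or_ne_zero with hx0 | hy0
  · exact mul_right_cancel₀ hx0 hx
  · exact mul_right_cancel₀ hy0 hy

theorem colon_span_singleton [IsDomain R] (h : HasOnlyKoszulSyzygies x y) (g : R) :
    (span {g}).colon (span {x, y} : Set R) = span {g} := by
  refine le_antisymm (fun z hz => ?_) Ideal.le_colon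
  rw [Ideal.colon_span, Submodule.mem_colon] at hz
  obtain ⟨p, hp⟩ := mem_span_singleton'.mp (hz x (by simp))
  obtain ⟨q, hq⟩ := mem_span_singleton'.mp (hz y (by simp))
  rcases eq_or_ne z 0 with rfl | hz0
  · exact zero_mem _
  obtain ⟨δ, rfl, rfl⟩ := h q p <| mul_left_cancel₀ hz0 <| by
    simp only [smul_eq_mul] at hp hq
    linear_combination -q * hp + p * hq
  simp only [smul_eq_mul] at hp hq
  exact mem_span_singleton'.mpr
    ⟨δ, h.eq_of_mul_eq_mul (by linear_combination hp) (by linear_combination hq)⟩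

theorem colon_span_pair_eq_sup_span_det [IsDomain R] (hxy : HasOnlyKoszulSyzygies x y) {a b : R}
    (hab : HasOnlyKoszulSyzygies a b) {f₁₁ f₁₂ f₂₁ f₂₂ : R} (ha : a = f₁₁ * x + f₁₂ * y)
    (hb : b = f₂₁ * x + f₂₂ * y) :
    (span {a, b}).colon (span {x, y} : Set R) = span {a, b} ⊔ span {f₁₁ * f₂₂ - f₁₂ * f₂₁} := by
  set c := f₁₁ * f₂₂ - f₁₂ * f₂₁
  have hcx : c * x = f₂₂ * a - f₁₂ * b := by rw [ha, hb]; ring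
  have hcy : c * y = f₁₁ * b - f₂₁ * a := by rw [ha, hb]; ring
  rw [Ideal.colon_span]
  refine le_antisymm (fun r hr => ?_) (sup_le Ideal.le_colon ?_)
  · rw [Submodule.mem_colon] at hr
    obtain ⟨u, v, hx⟩ := mem_span_pair.mp (hr x (by simp))
    obtain ⟨s, t, hy⟩ := mem_span_pair.mp (hr y (by simp))
    simp only [smul_eq_mul] at hx hy
    -- Subtracting `w * c` turns both coefficient pairs into Koszul relations of `x, y`.
    obtain ⟨w, hw₁, hw₂⟩ := hab (u * y - s * x) (t * x - v * y) (by
      linear_combination y * hx - x * hy)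
    obtain ⟨e, he₁, he₂⟩ := hxy (s + w * f₂₁) (u - w * f₂₂) (by
      linear_combination -hw₁ - w * hb)
    obtain ⟨g, hg₁, hg₂⟩ := hxy (t - w * f₁₁) (v + w * f₁₂) (by
      linear_combination hw₂ + w * ha)
    have hr : r = e * a + g * b + w * c := hxy.eq_of_mul_eq_mul
      (by linear_combination -hx + a * he₂ + b * hg₂ - w * hcx)
      (by linear_combination -hy + a * he₁ + b * hg₁ - w * hcy)
    rw [hr]
    exact add_mem (mem_sup_left (mem_span_pair.mpr ⟨e, g, rfl⟩))
      (mem_sup_right (mem_span_singleton'.mpr ⟨w, rfl⟩))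
  · rw [span_singleton_le_iff_mem, Submodule.mem_colon]
    rintro _ (rfl | rfl | _)
    · exact mem_span_pair.mpr ⟨f₂₂, -f₁₂, by rw [smul_eq_mul, hcx]; ring⟩
    · exact mem_span_pair.mpr ⟨-f₂₁, f₁₁, by rw [smul_eq_mul, hcy]; ring⟩

theorem of_le_radical [IsDomain R] [IsNoetherianRing R] (hxy : HasOnlyKoszulSyzygies x y)
    {a b : R} (hle : span {x, y} ≤ (span {a, b}).radical) (hne : span {a, b} ≠ ⊤) :
    HasOnlyKoszulSyzygies a b := by
  obtain ⟨N, hN⟩ := exists_pow_le_of_le_radical_of_fg hle (IsNoetherian.noetherian _)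
  have hcolon (g : R) : (span {g}).colon ((span {x, y} ^ N : Ideal R) : Set R) = span {g} :=
    Ideal.colon_pow_eq_self (hxy.colon_span_singleton g) N
  have hb : b ≠ 0 := by
    rintro rfl
    apply hne
    rw [Set.pair_comm, span_insert_zero, ← hcolon a, Submodule.colon_eq_top_iff_subset]
    simpa [Set.pair_comm] using hN
  intro α β h
  have hα : α ∈ (span {b}).colon (span {a, b} : Set R) := by
    rw [Ideal.colon_span, Submodule.mem_colon]
    rintro s (hs | hs) <;> rw [hs, smul_eq_mul]
    · exact mem_span_singleton'.mpr ⟨β, h.symm⟩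
    · exact mul_mem_left _ _ (mem_span_singleton_self b)
  obtain ⟨δ, rfl⟩ := mem_span_singleton'.mp (hcolon b ▸ Submodule.colon_mono le_rfl hN hα)
  exact ⟨δ, rfl, mul_right_cancel₀ hb (by linear_combination -h)⟩

end HasOnlyKoszulSyzygies

namespace IsLocalRing

variable {S : Type*} [CommRing S] [IsNoetherianRing S] [IsLocalRing S] {t : S}

theorem exists_eq_unit_mul_pow_of_maximalIdeal_eq_span (ht : maximalIdeal S = span {t})
    {s : S} (hs : s ≠ 0) : ∃ (u : Sˣ) (n : ℕ), s = u * t ^ n := by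
  classical
  have hex : ∃ n, s ∉ maximalIdeal S ^ n := by
    by_contra! h
    apply hs
    rw [← mem_bot, ← Ideal.iInf_pow_eq_bot_of_isLocalRing _ (maximalIdeal.isMaximal S).ne_top]
    exact Submodule.mem_iInf _ |>.mpr h
  obtain ⟨n, hn⟩ : ∃ n, s ∈ maximalIdeal S ^ n ∧ s ∉ maximalIdeal S ^ (n + 1) := by
    have h0 : Nat.find hex ≠ 0 := fun h => by simpa [h] using Nat.find_spec hex
    obtain ⟨n, hn⟩ := Nat.exists_eq_add_one_of_ne_zero h0
    exact ⟨n, not_not.mp (Nat.find_min hex (by omega)), hn ▸ Nat.find_spec hex⟩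
  rw [ht, span_singleton_pow, span_singleton_pow] at hn
  obtain ⟨r, rfl⟩ := mem_span_singleton'.mp hn.1
  have hr : IsUnit r := by
    by_contra hr
    obtain ⟨q, rfl⟩ := mem_span_singleton'.mp (ht ▸ (mem_maximalIdeal r).mpr hr)
    exact hn.2 (mem_span_singleton'.mpr ⟨q, by ring⟩)
  exact ⟨hr.unit, n, rfl⟩

theorem isDomain_of_maximalIdeal_eq_span (ht : maximalIdeal S = span {t})
    (hnil : ¬ IsNilpotent t) : IsDomain S := by
  have : NoZeroDivisors S := ⟨fun {s s'} h => by
    by_contra! hss'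
    obtain ⟨u, n, rfl⟩ := exists_eq_unit_mul_pow_of_maximalIdeal_eq_span ht hss'.1
    obtain ⟨u', n', rfl⟩ := exists_eq_unit_mul_pow_of_maximalIdeal_eq_span ht hss'.2
    refine hnil ⟨n + n', ?_⟩
    rw [← (u * u').isUnit.mul_right_eq_zero, ← h]
    push_cast
    ring⟩
  exact NoZeroDivisors.to_isDomain S

end IsLocalRing

section MaximalIdealSpanPair

variable {R : Type*} [CommRing R] [IsNoetherianRing R] [IsLocalRing R] {x y : R}

theorem pow_notMem_span_singleton_of_maximalIdeal_eq_span_pair (hdim : 1 < ringKrullDim R)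
    (hm : maximalIdeal R = span {x, y}) (n : ℕ) : y ^ n ∉ span {x} := by
  intro hn
  have hmin : maximalIdeal R ∈ (span {x}).minimalPrimes := by
    refine ⟨⟨inferInstance, hm ▸ span_mono (by simp)⟩, fun q ⟨hq, hxq⟩ _ => ?_⟩
    rw [hm, span_le, Set.insert_subset_iff, Set.singleton_subset_iff]
    exact ⟨hxq (mem_span_singleton_self x), hq.mem_of_pow_mem n (hxq hn)⟩
  have hle := height_le_one_of_isPrincipal_of_mem_minimalPrimes _ _ hmin
  rw [← maximalIdeal_height_eq_ringKrullDim] at hdim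
  exact (hdim.trans_le (WithBot.coe_le_coe.mpr hle)).false

theorem isPrime_span_singleton_of_maximalIdeal_eq_span_pair (hdim : 1 < ringKrullDim R)
    (hm : maximalIdeal R = span {x, y}) : (span {x}).IsPrime := by
  have hx : span {x} ≠ ⊤ := ne_top_of_le_ne_top (maximalIdeal.isMaximal R).ne_top
    (hm ▸ span_mono (by simp))
  have : Nontrivial (R ⧸ span {x}) := Quotient.nontrivial_iff.mpr hx
  have := IsLocalRing.of_surjective' _ (Ideal.Quotient.mk_surjective (I := span {x}))
  rw [← Quotient.isDomain_iff_prime]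
  refine isDomain_of_maximalIdeal_eq_span (t := Ideal.Quotient.mk (span {x}) y) ?_ ?_
  · rw [← map_maximalIdeal_of_surjective _ Ideal.Quotient.mk_surjective, hm, map_span,
      Set.image_pair, Quotient.eq_zero_iff_mem.mpr (mem_span_singleton_self x), span_insert_zero]
  · rintro ⟨n, hn⟩
    rw [← map_pow, Quotient.eq_zero_iff_mem] at hn
    exact pow_notMem_span_singleton_of_maximalIdeal_eq_span_pair hdim hm n hn

theorem hasOnlyKoszulSyzygies_of_maximalIdeal_eq_span_pair [IsDomain R]
    (hdim : 1 < ringKrullDim R) (hm : maximalIdeal R = span {x, y}) :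
    HasOnlyKoszulSyzygies x y := by
  have hm' : maximalIdeal R = span {y, x} := by rw [hm, Set.pair_comm]
  have hx : x ≠ 0 := fun h => by
    simpa [h] using pow_notMem_span_singleton_of_maximalIdeal_eq_span_pair hdim hm' 1
  intro α β h
  have hβ : β * y ∈ span {x} := h ▸ mul_mem_left _ α (mem_span_singleton_self x)
  obtain ⟨δ, rfl⟩ := mem_span_singleton'.mp <|
    ((isPrime_span_singleton_of_maximalIdeal_eq_span_pair hdim hm).mem_or_mem hβ).resolve_right
      (by simpa using pow_notMem_span_singleton_of_maximalIdeal_eq_span_pair hdim hm 1)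
  exact ⟨δ, mul_right_cancel₀ hx (by linear_combination h), rfl⟩

end MaximalIdealSpanPair

theorem stmt_4_general (R : Type*) [CommRing R] [IsDomain R] [IsNoetherianRing R] [IsLocalRing R]
    (hdim : ringKrullDim R = 2) (x y : R)
    (hm : maximalIdeal R = Ideal.span {x, y})
    (f₁₁ f₁₂ f₂₁ f₂₂ : R)
    (a b c : R) (ha : a = f₁₁ * x + f₁₂ * y) (hb : b = f₂₁ * x + f₂₂ * y)
    (hc : c = f₁₁ * f₂₂ - f₁₂ * f₂₁)
    (hQ : (Ideal.span {a, b} : Ideal R).radical = maximalIdeal R) :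
    Submodule.colon (Ideal.span {a, b} : Ideal R) (maximalIdeal R)
      = Ideal.span {a, b} ⊔ Ideal.span {c} := by
  have hxy : HasOnlyKoszulSyzygies x y :=
    hasOnlyKoszulSyzygies_of_maximalIdeal_eq_span_pair (by rw [hdim]; decide) hm
  have hab : HasOnlyKoszulSyzygies a b := hxy.of_le_radical (hm ▸ hQ.ge) fun h =>
    (maximalIdeal.isMaximal R).ne_top (by rw [← hQ, h, radical_top])
  rw [hm, hc]
  exact hxy.colon_span_pair_eq_sup_span_det hab ha hb

theorem stmt_4 (R : Type*) [CommRing R] [IsDomain R] [IsNoetherianRing R] [IsLocalRing R]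
    (hdim : ringKrullDim R = 2) (x y : R)
    (hm : maximalIdeal R = Ideal.span {x, y})
    (f₁₁ f₁₂ f₂₁ f₂₂ : R)
    (h11 : f₁₁ ∈ maximalIdeal R ^ 2) (h12 : f₁₂ ∈ maximalIdeal R ^ 2)
    (h21 : f₂₁ ∈ maximalIdeal R ^ 2) (h22 : f₂₂ ∈ maximalIdeal R ^ 2)
    (a b c : R) (ha : a = f₁₁ * x + f₁₂ * y) (hb : b = f₂₁ * x + f₂₂ * y)
    (hc : c = f₁₁ * f₂₂ - f₁₂ * f₂₁)
    (hQ : (Ideal.span {a, b} : Ideal R).radical = maximalIdeal R) :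
    Submodule.colon (Ideal.span {a, b} : Ideal R) (maximalIdeal R)
      = Ideal.span {a, b} ⊔ Ideal.span {c} :=
  stmt_4_general R hdim x y hm f₁₁ f₁₂ f₂₁ f₂₂ a b c ha hb hc hQ
end
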